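/- For each site x ∈ {1,…,L}, define the sub-stochastic matrix W_x^0 on {0,1}^L by W_x^0(r, r') = P(z^{t+1} = r' and s(x, t+1) = 0 | z^t = r), i.e., the restriction of the DSS transition kernel to transitions whose avalanche makes no toppling at site x. Then W_x^0 is nilpotent of index exactly x+1: (W_x^0)^{x+1} = 0 while (W_x^0)^x ≠ 0. -/

import Mathlib

namespace DSS

/-- A state of the DSS on `L` sites: a stable field `z : Fin L → Bool` together with a
finite multiset `w` of waiting particles (particles past site `L` have left the system). -/
structure State (L : ℕ) where
  z : Fin L → Bool
  w : Multiset (Fin L)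

variable {L : ℕ}

/-- The multiset holding the right neighbour of `x`; empty if the particle leaves the system. -/
def succSite (L : ℕ) (x : Fin L) : Multiset (Fin L) :=
  if h : x.val + 1 < L then {(⟨x.val + 1, h⟩ : Fin L)} else 0

/-- Evolution of a waiting particle at `x` when `z x = 1`: the waiting particle moves to
`x+1` and the stable particle at `x` becomes a waiting particle at `x`. -/
def topple (s : State L) (x : Fin L) : State L :=
  ⟨Function.update s.z x false, s.w + succSite L x⟩

/-- Evolution of a waiting particle at `x` when `z x = 0`, settling branch (probability p). -/
def settle (s : State L) (x : Fin L) : State L :=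
  ⟨Function.update s.z x true, s.w.erase x⟩

/-- Evolution of a waiting particle at `x` when `z x = 0`, jumping branch (probability q). -/
def jump (s : State L) (x : Fin L) : State L :=
  ⟨s.z, s.w.erase x + succSite L x⟩

/-- `stabilizeAux p q R n s c` is the probability that, evolving one waiting particle at a
time (the particle being selected by the rule `R`), the process started from `s` reaches
within `n` elementary steps a stable state whose stable field is `c`. -/
noncomputable def stabilizeAux (p q : ℝ) (R : State L → Option (Fin L)) :
    ℕ → State L → (Fin L → Bool) → ℝ
  | 0, s, c => if s.w = 0 ∧ s.z = c then 1 else 0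
  | n + 1, s, c =>
    match R s with
    | none => if s.z = c then 1 else 0
    | some x =>
      if s.z x then stabilizeAux p q R n (topple s x) c
      else p * stabilizeAux p q R n (settle s x) c
        + q * stabilizeAux p q R n (jump s x) c

/-- The canonical evolution rule: evolve the leftmost waiting particle. -/
def minRule (s : State L) : Option (Fin L) :=
  if h : s.w = 0 then none
  else some (s.w.toFinset.min'
    (Finset.nonempty_iff_ne_empty.mpr (by simpa [Multiset.toFinset_eq_empty] using h)))

/-- A termination measure: the stabilization process started from `s` ends after at most
`fuel s` elementary steps, whatever the rule and the randomness. -/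
def potential (s : State L) : ℕ :=
  (s.w.map fun x => L + 1 - x.val).sum + ∑ x : Fin L, (if s.z x then L + 1 - x.val else 0)

def fuel (s : State L) : ℕ := 2 * potential s + Multiset.card s.w

/-- Add one waiting particle at site `1` (index `0`). -/
def addGrain (r : Fin L → Bool) : State L :=
  ⟨r, if h : 0 < L then {(⟨0, h⟩ : Fin L)} else 0⟩

/-- The driven-dissipative transition kernel `W` of the DSS: add a particle at site 1 and
stabilize. -/
noncomputable def Wker (p q : ℝ) (r r' : Fin L → Bool) : ℝ :=
  stabilizeAux p q minRule (fuel (addGrain r)) (addGrain r) r'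

/-- `W` as a matrix on stable configurations. -/
noncomputable def Wmat (p q : ℝ) (L : ℕ) :
    Matrix (Fin L → Bool) (Fin L → Bool) ℝ :=
  Matrix.of fun r r' => Wker p q r r'

/-- The product Bernoulli(p) measure `ψ(r) = p^(Σ r) q^(L - Σ r)`. -/
noncomputable def psi (p q : ℝ) {L : ℕ} (r : Fin L → Bool) : ℝ :=
  p ^ (Finset.univ.filter fun x => r x = true).card *
    q ^ (L - (Finset.univ.filter fun x => r x = true).card)



/-- Same as `stabilizeAux`, additionally recording the number of topplings performed at each
site: `stabilizeSAux p q R n s c k` is the probability that the process started from `s`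
terminates within `n` steps on the stable field `c` having performed exactly `k x`
topplings (transfers of a waiting particle from `x` to `x+1`) at each site `x`. -/
noncomputable def stabilizeSAux (p q : ℝ) (R : State L → Option (Fin L)) :
    ℕ → State L → (Fin L → Bool) → (Fin L → ℕ) → ℝ
  | 0, s, c, k => if s.w = 0 ∧ s.z = c ∧ k = 0 then 1 else 0
  | n + 1, s, c, k =>
    match R s with
    | none => if s.z = c ∧ k = 0 then 1 else 0
    | some x =>
      if s.z x then
        (if k x = 0 then 0
          else stabilizeSAux p q R n (topple s x) c (Function.update k x (k x - 1)))
      else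
        p * stabilizeSAux p q R n (settle s x) c k
          + q * (if k x = 0 then 0
              else stabilizeSAux p q R n (jump s x) c (Function.update k x (k x - 1)))

/-- Joint avalanche kernel: `Kker p q r r' k` is the probability that, adding one particle
at site 1 to the stable configuration `r`, the resulting avalanche leads to the stable
configuration `r'` with exactly `k x` topplings at each site `x`. -/
noncomputable def Kker (p q : ℝ) (r r' : Fin L → Bool) (k : Fin L → ℕ) : ℝ :=
  stabilizeSAux p q minRule (fuel (addGrain r)) (addGrain r) r' k

/-- `E[s(x,t)]`: expectation of the number of topplings at site `x` in the `t`-th avalanche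
(`t ≥ 1`), for the stationary process started from `ψ`. -/
noncomputable def meanS (p q : ℝ) (L : ℕ) (t : ℕ) (x : Fin L) : ℝ :=
  ∑ r0 : Fin L → Bool, ∑ r1 : Fin L → Bool, ∑ r2 : Fin L → Bool,
    ∑' k : Fin L → ℕ,
      psi p q r0 * ((Wmat p q L) ^ (t - 1)) r0 r1 * Kker p q r1 r2 k * (k x : ℝ)

/-- `E[s(x,t) s(x',t+τ)]` (`t, τ ≥ 1`) for the stationary process started from `ψ`. -/
noncomputable def corrS (p q : ℝ) (L : ℕ) (t τ : ℕ) (x x' : Fin L) : ℝ :=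
  ∑ r0 : Fin L → Bool, ∑ r1 : Fin L → Bool, ∑ r2 : Fin L → Bool,
    ∑ r3 : Fin L → Bool, ∑ r4 : Fin L → Bool,
      ∑' k1 : Fin L → ℕ, ∑' k2 : Fin L → ℕ,
        psi p q r0 * ((Wmat p q L) ^ (t - 1)) r0 r1 *
          Kker p q r1 r2 k1 * (k1 x : ℝ) *
          ((Wmat p q L) ^ (τ - 1)) r2 r3 *
          Kker p q r3 r4 k2 * (k2 x' : ℝ)


/-- Restriction of the avalanche kernel to avalanches making no toppling at site `j`. -/
noncomputable def W0ker (p q : ℝ) {L : ℕ} (j : Fin L) (r r' : Fin L → Bool) : ℝ :=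
  ∑' k : Fin L → ℕ, if k j = 0 then Kker p q r r' k else 0

/-- The sub-stochastic matrix `W_j^0` of transitions whose avalanche makes no toppling
at site `j`. -/
noncomputable def W0mat (p q : ℝ) (L : ℕ) (j : Fin L) :
    Matrix (Fin L → Bool) (Fin L → Bool) ℝ :=
  Matrix.of fun r r' => W0ker p q j r r'

end DSS

/-!
An avalanche conserves the particles, stable or waiting, except that a toppling at `x` moves
one of them from `x` to `x + 1`. Hence an avalanche without toppling at `j` conserves the
number of particles in the sites `0, …, j`, and so ends with one more stable particle there
than it started with: the added grain. There are at most `j + 1` such particles, so no `j + 2`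
consecutive avalanches avoid toppling at `j`. Conversely, from the configuration with the sites
`0, …, i - 1` occupied, the grain can topple through these sites, each vacated site being
refilled by the particle that settles there, and settle at `i`; for `i ≤ j` this has
probability `p ^ (i + 1)` and makes no toppling at `j`. Chaining these avalanches for
`i = 0, …, j` gives a positive entry of `(W_j^0) ^ (j + 1)`.
-/

theorem Multiset.countP_singleton {α : Type*} (p : α → Prop) [DecidablePred p] (a : α) :
    ({a} : Multiset α).countP p = if p a then 1 else 0 := by
  rw [← cons_zero, countP_cons, countP_zero, zero_add]

namespace Matrix

variable {ι R : Type*} [Fintype ι] [DecidableEq ι]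

theorem grade_eq_add_of_pow_apply_ne_zero [Semiring R] {M : Matrix ι ι R} {f : ι → ℕ}
    (hM : ∀ a b, M a b ≠ 0 → f b = f a + 1) (n : ℕ) {a b : ι} (h : (M ^ n) a b ≠ 0) :
    f b = f a + n := by
  induction n generalizing b with
  | zero =>
    obtain rfl : a = b := by
      by_contra hab
      exact h (one_apply_ne hab)
    rfl
  | succ n ih =>
    rw [pow_succ, mul_apply] at h
    obtain ⟨c, -, hc⟩ := Finset.exists_ne_zero_of_sum_ne_zero h
    rw [hM c b (right_ne_zero_of_mul hc), ih (left_ne_zero_of_mul hc), add_assoc]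

theorem pow_eq_zero_of_grade_le [Semiring R] {M : Matrix ι ι R} {f : ι → ℕ} {B : ℕ}
    (hM : ∀ a b, M a b ≠ 0 → f b = f a + 1) (hf : ∀ a, f a ≤ B) : M ^ (B + 1) = 0 := by
  ext a b
  by_contra h
  have := grade_eq_add_of_pow_apply_ne_zero hM (B + 1) h
  have := hf b
  omega

theorem pow_apply_pos_of_chain [Semiring R] [PartialOrder R] [IsStrictOrderedRing R]
    {M : Matrix ι ι R} (hM : ∀ a b, 0 ≤ M a b) (v : ℕ → ι) (n : ℕ)
    (hv : ∀ i < n, 0 < M (v i) (v (i + 1))) : 0 < (M ^ n) (v 0) (v n) := by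
  induction n with
  | zero => simp
  | succ n ih =>
    rw [pow_succ, mul_apply]
    exact Finset.sum_pos' (fun c _ => mul_nonneg (pow_apply_nonneg hM _ _ _) (hM _ _))
      ⟨v n, Finset.mem_univ _, mul_pos (ih fun i hi => hv i (by omega)) (hv n (by omega))⟩

end Matrix

namespace DSS

variable {L : ℕ} {p q : ℝ}

section Unfolding

variable (R : State L → Option (Fin L)) (n : ℕ) (s : State L) (c : Fin L → Bool)
  (k : Fin L → ℕ)

theorem stabilizeSAux_zero :
    stabilizeSAux p q R 0 s c k = if s.w = 0 ∧ s.z = c ∧ k = 0 then 1 else 0 := rfl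

variable {R s}

theorem stabilizeSAux_succ_of_none (hR : R s = none) :
    stabilizeSAux p q R (n + 1) s c k = if s.z = c ∧ k = 0 then 1 else 0 := by
  simp [stabilizeSAux, hR]

theorem stabilizeSAux_succ_of_some {x : Fin L} (hR : R s = some x) :
    stabilizeSAux p q R (n + 1) s c k =
      if s.z x then
        (if k x = 0 then 0
          else stabilizeSAux p q R n (topple s x) c (Function.update k x (k x - 1)))
      else
        p * stabilizeSAux p q R n (settle s x) c k
          + q * (if k x = 0 then 0
              else stabilizeSAux p q R n (jump s x) c (Function.update k x (k x - 1))) := by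
  simp [stabilizeSAux, hR]

end Unfolding

def SelectsWaiting (R : State L → Option (Fin L)) : Prop :=
  ∀ s, (R s = none → s.w = 0) ∧ ∀ x, R s = some x → x ∈ s.w

theorem selectsWaiting_minRule : SelectsWaiting (minRule (L := L)) := by
  intro s
  unfold minRule
  split_ifs with hw
  · simp [hw]
  · simpa using Finset.min'_mem s.w.toFinset _

theorem minRule_eq_some {s : State L} {x : Fin L} (hx : x ∈ s.w) (hmin : ∀ y ∈ s.w, x ≤ y) :
    minRule s = some x := by
  rw [minRule, dif_neg (by rintro h; simp [h] at hx), Option.some_inj]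
  exact le_antisymm (Finset.min'_le _ _ (by simpa using hx))
    (Finset.le_min' _ _ _ fun y hy => hmin y (by simpa using hy))

theorem stabilizeSAux_nonneg (hp : 0 ≤ p) (hq : 0 ≤ q) (R : State L → Option (Fin L))
    (n : ℕ) (s : State L) (c : Fin L → Bool) (k : Fin L → ℕ) :
    0 ≤ stabilizeSAux p q R n s c k := by
  induction n generalizing s k with
  | zero => rw [stabilizeSAux_zero]; positivity
  | succ n ih =>
    rcases hR : R s with _ | x
    · rw [stabilizeSAux_succ_of_none _ _ _ hR]; positivity
    · rw [stabilizeSAux_succ_of_some _ _ _ hR]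
      split_ifs
      all_goals first
        | positivity
        | exact ih _ _
        | simpa only [mul_zero, add_zero] using mul_nonneg hp (ih _ _)
        | exact add_nonneg (mul_nonneg hp (ih _ _)) (mul_nonneg hq (ih _ _))

theorem le_of_stabilizeSAux_ne_zero {R : State L → Option (Fin L)} {n : ℕ} {s : State L}
    {c : Fin L → Bool} {k : Fin L → ℕ} (h : stabilizeSAux p q R n s c k ≠ 0) (x : Fin L) :
    k x ≤ n := by
  induction n generalizing s k with
  | zero =>
    rw [stabilizeSAux_zero] at h
    split_ifs at h with hs
    · simp [hs.2.2]
    · exact absurd rfl h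
  | succ n ih =>
    rcases hR : R s with _ | y
    · rw [stabilizeSAux_succ_of_none _ _ _ hR] at h
      split_ifs at h with hs
      · simp [hs.2]
      · exact absurd rfl h
    · rw [stabilizeSAux_succ_of_some _ _ _ hR] at h
      have after_topple {s' : State L}
          (h' : stabilizeSAux p q R n s' c (Function.update k y (k y - 1)) ≠ 0) :
          k x ≤ n + 1 := by
        have := ih h'
        rcases eq_or_ne x y with rfl | hxy
        · rw [Function.update_self] at this
          omega
        · rw [Function.update_of_ne hxy] at this
          omega
      split_ifs at h
      · exact absurd rfl h
      · exact after_topple h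
      · simp only [mul_zero, add_zero] at h
        exact (ih (right_ne_zero_of_mul h)).trans n.le_succ
      · by_cases hA : stabilizeSAux p q R n (settle s y) c k = 0
        · rw [hA, mul_zero, zero_add] at h
          exact after_topple (right_ne_zero_of_mul h)
        · exact (ih hA).trans n.le_succ

def stableSites (z : Fin L → Bool) : Finset (Fin L) := {x | z x = true}

def particles (s : State L) : Multiset (Fin L) := (stableSites s.z).val + s.w

def massUpTo (j : Fin L) (s : State L) : ℕ := (particles s).countP (· ≤ j)

theorem stableSites_update_true (z : Fin L → Bool) (x : Fin L) :
    (stableSites (Function.update z x true)).val =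
      x ::ₘ (stableSites (Function.update z x false)).val := by
  rw [← Finset.insert_val_of_notMem (by simp [stableSites])]
  congr 1
  ext y
  rcases eq_or_ne y x with rfl | hyx <;> simp [stableSites, *]

theorem particles_settle {s : State L} {x : Fin L} (hz : s.z x = false) (hx : x ∈ s.w) :
    particles (settle s x) = particles s := by
  rw [particles, particles, settle, stableSites_update_true,
    Function.update_eq_self_iff.mpr hz.symm, Multiset.cons_add, ← Multiset.add_cons,
    Multiset.cons_erase hx]

theorem particles_topple {s : State L} {x : Fin L} (hz : s.z x = true) :
    particles (topple s x) + {x} = particles s + succSite L x := by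
  have hz' : Function.update s.z x true = s.z := Function.update_eq_self_iff.mpr hz.symm
  rw [particles, particles, topple, ← hz', stableSites_update_true, Function.update_idem,
    ← Multiset.singleton_add]
  dsimp only
  ac_rfl

theorem particles_jump {s : State L} {x : Fin L} (hx : x ∈ s.w) :
    particles (jump s x) + {x} = particles s + succSite L x := by
  conv_rhs => rw [particles, ← Multiset.cons_erase hx, ← Multiset.singleton_add]
  rw [particles, jump]
  dsimp only
  ac_rfl

theorem countP_le_succSite {j x : Fin L} (hxj : x ≠ j) :
    (succSite L x).countP (· ≤ j) = ({x} : Multiset (Fin L)).countP (· ≤ j) := by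
  have := j.isLt
  have := Fin.val_ne_of_ne hxj
  unfold succSite
  split_ifs with h
  · rw [Multiset.countP_singleton, Multiset.countP_singleton]
    simp only [Fin.le_def]
    split_ifs <;> omega
  · rw [Multiset.countP_zero, Multiset.countP_singleton, if_neg (by rw [Fin.le_def]; omega)]

theorem massUpTo_eq_of_transfer {j x : Fin L} {s s' : State L} (hxj : x ≠ j)
    (h : particles s' + {x} = particles s + succSite L x) : massUpTo j s' = massUpTo j s := by
  have := congrArg (Multiset.countP (· ≤ j)) h
  simp only [Multiset.countP_add, countP_le_succSite hxj] at this
  exact Nat.add_right_cancel this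

theorem massUpTo_addGrain (j : Fin L) (r : Fin L → Bool) :
    massUpTo j (addGrain r) = massUpTo j ⟨r, 0⟩ + 1 := by
  rw [massUpTo, massUpTo, particles, particles, addGrain]
  dsimp only
  rw [dif_pos j.pos, Multiset.countP_add, Multiset.countP_add, Multiset.countP_zero, add_zero,
    Multiset.countP_singleton, if_pos (Fin.mk_le_of_le_val (Nat.zero_le j))]

theorem massUpTo_le (j : Fin L) (c : Fin L → Bool) : massUpTo j ⟨c, 0⟩ ≤ j + 1 := by
  rw [massUpTo, particles]
  dsimp only
  rw [add_zero, Multiset.countP_eq_card_filter, ← Finset.filter_val, Finset.card_val]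
  exact (Finset.card_le_card fun x hx => by simpa using (Finset.mem_filter.mp hx).2).trans_eq
    (Fin.card_Iic j)

theorem massUpTo_eq_of_stabilizeSAux_ne_zero {R : State L → Option (Fin L)}
    (hR : SelectsWaiting R) {j : Fin L} {n : ℕ} {s : State L} {c : Fin L → Bool}
    {k : Fin L → ℕ} (hkj : k j = 0)
    (h : stabilizeSAux p q R n s c k ≠ 0) : massUpTo j ⟨c, 0⟩ = massUpTo j s := by
  induction n generalizing s k with
  | zero =>
    rw [stabilizeSAux_zero] at h
    split_ifs at h with hs
    · rw [← hs.1, ← hs.2.1]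
    · exact absurd rfl h
  | succ n ih =>
    rcases hx : R s with _ | x
    · rw [stabilizeSAux_succ_of_none _ _ _ hx] at h
      split_ifs at h with hs
      · rw [← (hR s).1 hx, ← hs.1]
      · exact absurd rfl h
    have hxw : x ∈ s.w := (hR s).2 x hx
    have after_transfer {s' : State L} (hs' : particles s' + {x} = particles s + succSite L x)
        (hkx : k x ≠ 0)
        (h' : stabilizeSAux p q R n s' c (Function.update k x (k x - 1)) ≠ 0) :
        massUpTo j ⟨c, 0⟩ = massUpTo j s := by
      have hxj : x ≠ j := by rintro rfl; exact hkx hkj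
      rw [ih (by rwa [Function.update_of_ne hxj.symm]) h']
      exact massUpTo_eq_of_transfer hxj hs'
    rw [stabilizeSAux_succ_of_some _ _ _ hx] at h
    split_ifs at h with hz hkx hkx
    · exact absurd rfl h
    · exact after_transfer (particles_topple hz) hkx h
    · simp only [mul_zero, add_zero] at h
      rw [ih hkj (right_ne_zero_of_mul h)]
      simp only [massUpTo, particles_settle (by simpa using hz) hxw]
    · by_cases hA : stabilizeSAux p q R n (settle s x) c k = 0
      · rw [hA, mul_zero, zero_add] at h
        exact after_transfer (particles_jump hxw) hkx (right_ne_zero_of_mul h)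
      · rw [ih hkj hA]
        simp only [massUpTo, particles_settle (by simpa using hz) hxw]

theorem massUpTo_succ_of_W0ker_ne_zero {j : Fin L} {r r' : Fin L → Bool}
    (h : W0ker p q j r r' ≠ 0) : massUpTo j ⟨r', 0⟩ = massUpTo j ⟨r, 0⟩ + 1 := by
  obtain ⟨k, hk⟩ : ∃ k, (if k j = 0 then Kker p q r r' k else 0) ≠ 0 := by
    by_contra! hzero
    exact h (by simp [W0ker, hzero])
  split_ifs at hk with hkj
  · rw [massUpTo_eq_of_stabilizeSAux_ne_zero selectsWaiting_minRule hkj hk, massUpTo_addGrain]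
  · exact absurd rfl hk

def occupiedBelow (i : ℕ) : Fin L → Bool := fun x => decide (x.val < i)

def oneOnIco (m i : ℕ) : Fin L → ℕ := fun x => if m ≤ x.val ∧ x.val < i then 1 else 0

theorem stabilizeSAux_stable (n : ℕ) (c : Fin L → Bool) :
    stabilizeSAux p q minRule n ⟨c, 0⟩ c 0 = 1 := by
  cases n with
  | zero => simp [stabilizeSAux_zero]
  | succ n =>
    have hnone : minRule (⟨c, 0⟩ : State L) = none := by simp [minRule]
    simp [stabilizeSAux_succ_of_none _ _ _ hnone]

theorem stabilizeSAux_wave_end (n : ℕ) {i : ℕ} (hi : i < L) :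
    stabilizeSAux p q minRule (n + 1) ⟨occupiedBelow i, {⟨i, hi⟩}⟩ (occupiedBelow (i + 1))
      (oneOnIco i i) = p := by
  rw [stabilizeSAux_succ_of_some _ _ _
    (minRule_eq_some (Multiset.mem_singleton_self _) (by simp))]
  have hsettle :
      settle ⟨occupiedBelow i, {⟨i, hi⟩}⟩ ⟨i, hi⟩ = ⟨occupiedBelow (i + 1), 0⟩ := by
    simp only [settle, Multiset.erase_singleton, State.mk.injEq, and_true]
    funext x
    rcases eq_or_ne x ⟨i, hi⟩ with rfl | hx
    · simp [occupiedBelow]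
    · have : x.val ≠ i := fun h => hx (Fin.ext h)
      rw [Function.update_of_ne hx]
      simp only [occupiedBelow, decide_eq_decide]
      omega
  have hk : oneOnIco (L := L) i i = 0 := by
    funext x
    simp [oneOnIco]
  simp [occupiedBelow, hsettle, hk, stabilizeSAux_stable]

theorem stabilizeSAux_wave_step (n : ℕ) {m i : ℕ} (hmi : m < i) (hi : i < L)
    (c : Fin L → Bool) :
    stabilizeSAux p q minRule (n + 2) ⟨occupiedBelow i, {⟨m, by omega⟩}⟩ c (oneOnIco m i) =
      p * stabilizeSAux p q minRule n ⟨occupiedBelow i, {⟨m + 1, by omega⟩}⟩ c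
        (oneOnIco (m + 1) i) := by
  set x : Fin L := ⟨m, by omega⟩
  set x' : Fin L := ⟨m + 1, by omega⟩
  have hx : occupiedBelow i x = true := by simpa [occupiedBelow, x]
  have hkx : oneOnIco m i x = 1 := by simp [oneOnIco, x, hmi]
  have hk : Function.update (oneOnIco m i) x 0 = oneOnIco (m + 1) i := by
    funext y
    rcases eq_or_ne y x with rfl | hy
    · simp [oneOnIco, x]
    · have : y.val ≠ m := fun h => hy (Fin.ext h)
      simp only [oneOnIco, Function.update_of_ne hy]
      congr 1
      simp only [eq_iff_iff]
      omega
  have htopple : topple ⟨occupiedBelow i, {x}⟩ x =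
      ⟨Function.update (occupiedBelow i) x false, {x} + {x'}⟩ := by
    simp [topple, succSite, x, x', show m + 1 < L by omega]
  have hsettle : settle ⟨Function.update (occupiedBelow i) x false, {x} + {x'}⟩ x =
      ⟨occupiedBelow i, {x'}⟩ := by
    simp [settle, hx]
  have hmin : ∀ y ∈ ({x} + {x'} : Multiset (Fin L)), x ≤ y := by
    rintro y hy
    simp only [Multiset.mem_add, Multiset.mem_singleton] at hy
    rcases hy with rfl | rfl <;> simp [Fin.le_def, x, x']
  have hk' : oneOnIco (m + 1) i x = 0 := by simp [oneOnIco, x]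
  -- The jump branch at the vacated site `m` would need a second toppling at `m`.
  rw [stabilizeSAux_succ_of_some _ _ _
      (minRule_eq_some (Multiset.mem_singleton_self _) (by simp)),
    if_pos hx, hkx, if_neg one_ne_zero, Nat.sub_self, hk, htopple,
    stabilizeSAux_succ_of_some _ _ _ (minRule_eq_some (by simp) hmin)]
  simp only [Function.update_self, Bool.false_eq_true, if_false, hsettle, hk', if_true, mul_zero,
    add_zero]

theorem stabilizeSAux_wave_pos (hp : 0 < p) {i : ℕ} (hi : i < L) (d : ℕ) :
    ∀ (m n : ℕ) (hm : m + d = i), 2 * d + 1 ≤ n →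
      0 < stabilizeSAux p q minRule n (⟨occupiedBelow i, {⟨m, by omega⟩}⟩ : State L)
        (occupiedBelow (i + 1)) (oneOnIco m i) := by
  induction d with
  | zero =>
    intro m n hm hn
    obtain rfl : m = i := hm
    obtain ⟨n, rfl⟩ : ∃ n', n = n' + 1 := ⟨n - 1, by omega⟩
    rw [stabilizeSAux_wave_end n hi]
    exact hp
  | succ d ih =>
    intro m n hm hn
    obtain ⟨n, rfl⟩ : ∃ n', n = n' + 2 := ⟨n - 2, by omega⟩
    rw [stabilizeSAux_wave_step n (by omega) hi]
    exact mul_pos hp (ih (m + 1) n (by omega) (by omega))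

theorem Kker_occupiedBelow_pos (hp : 0 < p) {i : ℕ} (hi : i < L) :
    0 < Kker p q (occupiedBelow (L := L) i) (occupiedBelow (i + 1)) (oneOnIco 0 i) := by
  have hgrain :
      addGrain (occupiedBelow (L := L) i) = ⟨occupiedBelow i, {⟨0, by omega⟩}⟩ := by
    simp [addGrain, show 0 < L by omega]
  have hfuel : 2 * i + 1 ≤ fuel (⟨occupiedBelow i, {⟨0, by omega⟩}⟩ : State L) := by
    simp only [fuel, potential, Multiset.map_singleton, Multiset.sum_singleton,
      Multiset.card_singleton]
    omega
  rw [Kker, hgrain]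
  exact stabilizeSAux_wave_pos hp hi i 0 _ (zero_add i) (by omega)

theorem Kker_support_finite (r r' : Fin L → Bool) : (Function.support (Kker p q r r')).Finite :=
  (Set.finite_Iic fun _ => fuel (addGrain r)).subset fun _ hk => le_of_stabilizeSAux_ne_zero hk

theorem W0ker_nonneg (hp : 0 ≤ p) (hq : 0 ≤ q) (j : Fin L) (r r' : Fin L → Bool) :
    0 ≤ W0ker p q j r r' :=
  tsum_nonneg fun _ => by
    split_ifs
    exacts [stabilizeSAux_nonneg hp hq _ _ _ _ _, le_rfl]

theorem W0ker_occupiedBelow_pos (hp : 0 < p) (hq : 0 ≤ q) {j : Fin L} {i : ℕ} (hij : i ≤ j) :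
    0 < W0ker p q j (occupiedBelow i) (occupiedBelow (i + 1)) := by
  set f := fun k : Fin L → ℕ =>
    if k j = 0 then Kker p q (occupiedBelow i) (occupiedBelow (i + 1)) k else 0
  have hsum : Summable f := summable_of_hasFiniteSupport <| (Kker_support_finite _ _).subset
    fun k hk => by
      simp only [Function.mem_support, f] at hk ⊢
      split_ifs at hk
      exacts [hk, absurd rfl hk]
  have hterm := hsum.le_tsum (oneOnIco 0 i) fun k _ => by
    simp only [f]
    split_ifs
    exacts [stabilizeSAux_nonneg hp.le hq _ _ _ _ _, le_rfl]
  rw [show f (oneOnIco 0 i) = Kker p q (occupiedBelow i) (occupiedBelow (i + 1)) (oneOnIco 0 i)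
    from if_pos (by simpa [oneOnIco] using hij)] at hterm
  exact (Kker_occupiedBelow_pos hp (by omega)).trans_le hterm

/-- Lean index `j` is paper site `x = j + 1`, so the paper's index `x + 1` is `j + 2`. -/
theorem W0_nilpotent_of_index_general
    (L : ℕ) (p q : ℝ) (hp : 0 < p) (hq : 0 < q)
    (j : Fin L) :
    (W0mat p q L j) ^ ((j : ℕ) + 2) = 0 ∧ (W0mat p q L j) ^ ((j : ℕ) + 1) ≠ 0 := by
  constructor
  · exact Matrix.pow_eq_zero_of_grade_le (fun _ _ h => massUpTo_succ_of_W0ker_ne_zero h)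
      (massUpTo_le j)
  · intro h
    have hpos := Matrix.pow_apply_pos_of_chain (M := W0mat p q L j)
      (W0ker_nonneg hp.le hq.le j) (fun i => occupiedBelow i) (j + 1)
      fun i hi => W0ker_occupiedBelow_pos hp hq.le (by omega)
    simp [h] at hpos

/-- the sub-stochastic matrix `W_j^0` (transitions with no toppling at the
site of Lean index `j`, i.e. paper site `j+1`) is nilpotent of index exactly `j+2`
(paper: `x+1` for paper site `x = j+1`). -/
theorem W0_nilpotent_of_index
    (L : ℕ) (hL : 0 < L) (p q : ℝ) (hp : 0 < p) (hq : 0 < q) (hpq : p + q = 1)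
    (j : Fin L) :
    (W0mat p q L j) ^ ((j : ℕ) + 2) = 0 ∧ (W0mat p q L j) ^ ((j : ℕ) + 1) ≠ 0 :=
  W0_nilpotent_of_index_general L p q hp hq j

end DSS
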